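/- arXiv:1103.3488 — 7 statements merged into one kernel-verified Lean document; each statement's English description precedes it below -/
import Mathlib

section
/- The assignment σ ↦ inv(σ) = {(i,j) : 1 ≤ i < j ≤ n and σ⁻¹(i) > σ⁻¹(j)} defines a bijection from the symmetric group on [n] onto the set of all clopen subsets of J_n = {(i,j) : 1 ≤ i < j ≤ n}. -/
/-- `J_n = {(i,j) : 1 ≤ i < j ≤ n}`. -/
def JnS (n : ℕ) : Set (ℕ × ℕ) := {p | 1 ≤ p.1 ∧ p.1 < p.2 ∧ p.2 ≤ n}

/-- Transitivity of a set of pairs, viewed as a binary relation. -/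
def TransSet (x : Set (ℕ × ℕ)) : Prop := ∀ i j k : ℕ, (i, j) ∈ x → (j, k) ∈ x → (i, k) ∈ x

/-- A subset of `J_n` is closed if it is transitive. -/
def ClosedIn (n : ℕ) (x : Set (ℕ × ℕ)) : Prop := x ⊆ JnS n ∧ TransSet x

/-- A subset of `J_n` is clopen if both it and its complement in `J_n` are closed. -/
def ClopenIn (n : ℕ) (x : Set (ℕ × ℕ)) : Prop := ClosedIn n x ∧ ClosedIn n (JnS n \ x)

/-- The inversion set of a permutation `σ` of `[n] = {1,…,n}`:
`inv σ = {(i,j) ∈ J_n : σ⁻¹ i > σ⁻¹ j}`. -/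
def invSet (n : ℕ) (σ : Equiv.Perm (Set.Icc 1 n)) : Set (ℕ × ℕ) :=
  {p | ∃ (h1 : p.1 ∈ Set.Icc 1 n) (h2 : p.2 ∈ Set.Icc 1 n),
      p.1 < p.2 ∧ (σ.symm ⟨p.2, h2⟩ : ℕ) < (σ.symm ⟨p.1, h1⟩ : ℕ)}

/-!
A permutation `σ` of `[n]` is the same thing as the linear order `a ≺ b ↔ σ⁻¹ a < σ⁻¹ b` on
`[n]`, and `inv σ` records exactly the pairs `i < j` with `j ≺ i`. Conversely, any `x ⊆ J_n`
defines a relation `≺` by this recipe (`relOfInversions x`); it is always total and irreflexive,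
and transitivity of `x` and of `J_n \ x` is exactly what rules out 3-cycles, so `≺` is a strict
total order when `x` is clopen. A finite chain has no nontrivial order automorphisms, so every
strict total order on `[n]` comes from exactly one permutation.
-/

namespace Equiv.Perm

variable {α : Type*} [LinearOrder α]

theorem eq_of_symm_lt_iff [WellFoundedLT α] {σ τ : Perm α}
    (h : ∀ a b, σ.symm a < σ.symm b ↔ τ.symm a < τ.symm b) : σ = τ := by
  let f : α ≃o α := .ofRelIsoLT ⟨τ.trans σ.symm, fun {c d} => by simpa using h (τ c) (τ d)⟩
  ext a
  exact (σ.symm_apply_eq.mp (DFunLike.congr_fun (Subsingleton.elim f (OrderIso.refl α)) a)).symm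

theorem exists_symm_lt_iff [Finite α] (r : α → α → Prop) [IsStrictTotalOrder α r] :
    ∃ σ : Perm α, ∀ a b, σ.symm a < σ.symm b ↔ r a b := by
  classical
  have := Fintype.ofFinite α
  obtain ⟨e, he⟩ : ∃ e : Fin (Fintype.card α) ≃ α, ∀ i j, r (e i) (e j) ↔ i < j := by
    let := linearOrderOfSTO r
    let o := Fintype.orderIsoFinOfCardEq α rfl
    exact ⟨o.toEquiv, fun i j => o.lt_iff_lt⟩
  let o := Fintype.orderIsoFinOfCardEq α rfl
  refine ⟨o.symm.toEquiv.trans e, fun a b => ?_⟩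
  change o (e.symm a) < o (e.symm b) ↔ r a b
  rw [o.lt_iff_lt, ← he, e.apply_symm_apply, e.apply_symm_apply]

end Equiv.Perm

variable {n : ℕ}

theorem invSet_subset_JnS (σ : Equiv.Perm (Set.Icc 1 n)) : invSet n σ ⊆ JnS n :=
  fun _ ⟨h₁, h₂, hlt, _⟩ => ⟨h₁.1, hlt, h₂.2⟩

theorem transSet_invSet (σ : Equiv.Perm (Set.Icc 1 n)) : TransSet (invSet n σ) :=
  fun _ _ _ ⟨hi, _, hij, hji⟩ ⟨_, hk, hjk, hkj⟩ => ⟨hi, hk, hij.trans hjk, hkj.trans hji⟩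

theorem transSet_JnS_diff_invSet (σ : Equiv.Perm (Set.Icc 1 n)) :
    TransSet (JnS n \ invSet n σ) := by
  rintro i j k ⟨hij, hij'⟩ ⟨hjk, hjk'⟩
  refine ⟨⟨hij.1, hij.2.1.trans hjk.2.1, hjk.2.2⟩, fun ⟨hi, hk, _, hki⟩ => ?_⟩
  have hj : j ∈ Set.Icc 1 n := ⟨hjk.1, hij.2.2⟩
  have h₁ : σ.symm ⟨i, hi⟩ ≤ σ.symm ⟨j, hj⟩ := not_lt.mp fun h => hij' ⟨hi, hj, hij.2.1, h⟩
  have h₂ : σ.symm ⟨j, hj⟩ ≤ σ.symm ⟨k, hk⟩ := not_lt.mp fun h => hjk' ⟨hj, hk, hjk.2.1, h⟩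
  exact hki.not_ge (h₁.trans h₂)

theorem clopenIn_invSet (σ : Equiv.Perm (Set.Icc 1 n)) : ClopenIn n (invSet n σ) :=
  ⟨⟨invSet_subset_JnS σ, transSet_invSet σ⟩, Set.sdiff_subset, transSet_JnS_diff_invSet σ⟩

def relOfInversions (x : Set (ℕ × ℕ)) (a b : Set.Icc 1 n) : Prop :=
  a < b ∧ ((a : ℕ), (b : ℕ)) ∉ x ∨ b < a ∧ ((b : ℕ), (a : ℕ)) ∈ x

theorem symm_lt_iff_relOfInversions_invSet (σ : Equiv.Perm (Set.Icc 1 n)) (a b : Set.Icc 1 n) :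
    σ.symm a < σ.symm b ↔ relOfInversions (invSet n σ) a b := by
  have mem_invSet {a b : Set.Icc 1 n} (hab : a < b) :
      ((a : ℕ), (b : ℕ)) ∈ invSet n σ ↔ σ.symm b < σ.symm a :=
    ⟨fun ⟨_, _, _, h⟩ => h, fun h => ⟨a.2, b.2, hab, h⟩⟩
  rcases lt_trichotomy a b with hab | rfl | hba
  · simp [relOfInversions, hab, hab.not_gt, mem_invSet hab, (σ.symm.injective.ne hab.ne).le_iff_lt]
  · simp [relOfInversions]
  · simp [relOfInversions, hba, hba.not_gt, mem_invSet hba]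

theorem mem_iff_relOfInversions {x : Set (ℕ × ℕ)} (hx : x ⊆ JnS n) (p : ℕ × ℕ) :
    p ∈ x ↔ ∃ (h₁ : p.1 ∈ Set.Icc 1 n) (h₂ : p.2 ∈ Set.Icc 1 n),
      p.1 < p.2 ∧ relOfInversions x ⟨p.2, h₂⟩ ⟨p.1, h₁⟩ := by
  refine ⟨fun hp => ?_, ?_⟩
  · obtain ⟨h₁, hlt, h₂⟩ := hx hp
    exact ⟨⟨h₁, hlt.le.trans h₂⟩, ⟨h₁.trans hlt.le, h₂⟩, hlt, .inr ⟨hlt, hp⟩⟩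
  · rintro ⟨_, _, hlt, ⟨hgt, -⟩ | ⟨-, hp⟩⟩
    exacts [absurd hlt hgt.not_gt, hp]

theorem relOfInversions_trans {x : Set (ℕ × ℕ)} (hx : ClopenIn n x) {a b c : Set.Icc 1 n} :
    relOfInversions x a b → relOfInversions x b c → relOfInversions x a c := by
  obtain ⟨⟨-, hx⟩, -, hxc⟩ := hx
  have mem_JnS {a b : Set.Icc 1 n} (h : a < b) : ((a : ℕ), (b : ℕ)) ∈ JnS n := ⟨a.2.1, h, b.2.2⟩
  rintro (⟨hab, hab'⟩ | ⟨hba, hba'⟩) (⟨hbc, hbc'⟩ | ⟨hcb, hcb'⟩)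
  · exact .inl ⟨hab.trans hbc, (hxc _ _ _ ⟨mem_JnS hab, hab'⟩ ⟨mem_JnS hbc, hbc'⟩).2⟩
  · rcases lt_trichotomy a c with hac | rfl | hca
    · exact .inl ⟨hac, fun h => hab' (hx _ _ _ h hcb')⟩
    · exact absurd hcb' hab'
    · exact .inr ⟨hca, by_contra fun h => (hxc _ _ _ ⟨mem_JnS hca, h⟩ ⟨mem_JnS hab, hab'⟩).2 hcb'⟩
  · rcases lt_trichotomy a c with hac | rfl | hca
    · exact .inl ⟨hac, fun h => hbc' (hx _ _ _ hba' h)⟩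
    · exact absurd hba' hbc'
    · exact .inr ⟨hca, by_contra fun h => (hxc _ _ _ ⟨mem_JnS hbc, hbc'⟩ ⟨mem_JnS hca, h⟩).2 hba'⟩
  · exact .inr ⟨hcb.trans hba, hx _ _ _ hcb' hba'⟩

theorem isStrictTotalOrder_relOfInversions {x : Set (ℕ × ℕ)} (hx : ClopenIn n x) :
    IsStrictTotalOrder (Set.Icc 1 n) (relOfInversions x) where
  trichotomous a b hab hba := by
    unfold relOfInversions at hab hba
    rcases lt_trichotomy a b with h | h | h <;> tauto
  irrefl a := by rintro (⟨h, -⟩ | ⟨h, -⟩) <;> exact h.false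
  trans _ _ _ := relOfInversions_trans hx

theorem invSet_injective : Function.Injective (invSet n) := fun σ τ h =>
  Equiv.Perm.eq_of_symm_lt_iff fun a b => by
    rw [symm_lt_iff_relOfInversions_invSet, h, ← symm_lt_iff_relOfInversions_invSet]

theorem invSet_eq_of_symm_lt_iff {x : Set (ℕ × ℕ)} (hx : x ⊆ JnS n) {σ : Equiv.Perm (Set.Icc 1 n)}
    (h : ∀ a b, σ.symm a < σ.symm b ↔ relOfInversions x a b) : invSet n σ = x := by
  ext p
  simp only [invSet, mem_iff_relOfInversions hx p, Set.mem_ofPred_eq, Subtype.coe_lt_coe, h]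

theorem stmt0_general (n : ℕ) :
    Set.BijOn (invSet n) Set.univ {x | ClopenIn n x} := by
  refine ⟨fun σ _ => clopenIn_invSet σ, invSet_injective.injOn, fun x hx => ?_⟩
  have := isStrictTotalOrder_relOfInversions hx
  obtain ⟨σ, hσ⟩ := Equiv.Perm.exists_symm_lt_iff (relOfInversions (n := n) x)
  exact ⟨σ, trivial, invSet_eq_of_symm_lt_iff hx.1.1 hσ⟩

/-- The assignment `σ ↦ inv σ` is a bijection from the symmetric group on `[n]`
onto the set of all clopen subsets of `J_n`. -/
theorem stmt0 (n : ℕ) (hn : 0 < n) :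
    Set.BijOn (invSet n) Set.univ {x | ClopenIn n x} :=
  stmt0_general n
end

section
/- For every open subset x of J_n, the transitive closure cl(x) is also open. Dually, for every closed subset x of J_n, the interior int(x) (the largest open subset of x) is closed. -/
/-- A subset of `J_n` is open if its complement in `J_n` is closed. -/
def OpenIn (n : ℕ) (x : Set (ℕ × ℕ)) : Prop := x ⊆ JnS n ∧ ClosedIn n (JnS n \ x)

/-- The transitive closure of a set of pairs. -/
def clS (x : Set (ℕ × ℕ)) : Set (ℕ × ℕ) :=
  {p | Relation.TransGen (fun a b => (a, b) ∈ x) p.1 p.2}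

def SplitsBetween {α : Type*} [LT α] (r : α → α → Prop) : Prop :=
  ∀ ⦃a c⦄, r a c → ∀ ⦃b⦄, a < b → b < c → r a b ∨ r b c

theorem SplitsBetween.transGen {α : Type*} [LinearOrder α] {r : α → α → Prop}
    (hr : SplitsBetween r) : SplitsBetween (Relation.TransGen r) := by
  intro a c hac
  induction hac with
  | single hac => exact fun b hab hbc => (hr hac hab hbc).imp .single .single
  | @tail d c had hdc ih =>
    intro b hab hbc
    rcases lt_trichotomy b d with hbd | rfl | hdb
    · exact (ih hab hbd).imp id (·.tail hdc)
    · exact .inl had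
    · exact (hr hdc hdb hbc).imp had.tail .single

section Jn

variable {n : ℕ} {x y z : Set (ℕ × ℕ)}

theorem mem_clS {i k : ℕ} : (i, k) ∈ clS x ↔ Relation.TransGen (fun a b => (a, b) ∈ x) i k :=
  Iff.rfl

theorem subset_clS : x ⊆ clS x := fun _ h => .single h

theorem transSet_clS : TransSet (clS x) := fun _ _ _ => .trans

theorem clS_subset_of_transSet (hyz : y ⊆ z) (hz : TransSet z) : clS y ⊆ z := by
  rintro ⟨i, k⟩ hik
  rw [mem_clS] at hik
  induction hik with
  | single h => exact hyz h
  | tail _ h ih => exact hz _ _ _ ih (hyz h)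

theorem clS_subset_JnS (hx : x ⊆ JnS n) : clS x ⊆ JnS n :=
  clS_subset_of_transSet hx fun _ _ _ hij hjk => ⟨hij.1, hij.2.1.trans hjk.2.1, hjk.2.2⟩

theorem closedIn_clS (hx : x ⊆ JnS n) : ClosedIn n (clS x) :=
  ⟨clS_subset_JnS hx, transSet_clS⟩

theorem openIn_diff_of_closedIn (hx : ClosedIn n x) : OpenIn n (JnS n \ x) :=
  ⟨Set.sdiff_subset, by rwa [Set.sdiff_sdiff_cancel_left hx.1]⟩

theorem openIn_iff_splitsBetween :
    OpenIn n x ↔ x ⊆ JnS n ∧ SplitsBetween (fun a b => (a, b) ∈ x) := by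
  refine and_congr_right fun hx => ⟨fun ⟨_, ht⟩ => ?_, fun hs => ⟨Set.sdiff_subset, ?_⟩⟩
  · intro a c hac b hab hbc
    have hJ := hx hac
    by_contra! h
    exact (ht a b c ⟨⟨hJ.1, hab, hbc.le.trans hJ.2.2⟩, h.1⟩
      ⟨⟨hJ.1.trans hab.le, hbc, hJ.2.2⟩, h.2⟩).2 hac
  · intro i j k ⟨hij, hij'⟩ ⟨hjk, hjk'⟩
    refine ⟨⟨hij.1, hij.2.1.trans hjk.2.1, hjk.2.2⟩, fun hik => ?_⟩
    exact (hs hik hij.2.1 hjk.2.1).elim hij' hjk'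

theorem openIn_clS (hx : OpenIn n x) : OpenIn n (clS x) := by
  rw [openIn_iff_splitsBetween] at hx ⊢
  exact ⟨clS_subset_JnS hx.1, hx.2.transGen⟩

def intS (n : ℕ) (x : Set (ℕ × ℕ)) : Set (ℕ × ℕ) := JnS n \ clS (JnS n \ x)

theorem intS_subset : intS n x ⊆ x := fun _ hp =>
  by_contra fun hpx => hp.2 (subset_clS ⟨hp.1, hpx⟩)

theorem openIn_intS : OpenIn n (intS n x) :=
  openIn_diff_of_closedIn (closedIn_clS Set.sdiff_subset)

theorem subset_intS (hy : OpenIn n y) (hyx : y ⊆ x) : y ⊆ intS n x := by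
  have hcl : clS (JnS n \ x) ⊆ JnS n \ y :=
    clS_subset_of_transSet (Set.sdiff_subset_sdiff_right hyx) hy.2.2
  exact fun p hp => ⟨hy.1 hp, fun h => (hcl h).2 hp⟩

theorem closedIn_intS (hx : ClosedIn n x) : ClosedIn n (intS n x) :=
  (openIn_clS (openIn_diff_of_closedIn hx)).2

end Jn

/-- For every open subset `x` of `J_n`, the transitive closure `cl x` is open; dually,
for every closed subset `x` of `J_n`, the interior `int x` (the largest open subset
of `x`) exists and is closed. -/
theorem stmt1 (n : ℕ) (x : Set (ℕ × ℕ)) :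
    (OpenIn n x → OpenIn n (clS x)) ∧
    (ClosedIn n x →
      ∃ i : Set (ℕ × ℕ), IsGreatest {y | OpenIn n y ∧ y ⊆ x} i ∧ ClosedIn n i) :=
  ⟨openIn_clS, fun hx =>
    ⟨intS n x, ⟨⟨openIn_intS, intS_subset⟩, fun _ ⟨hy, hyx⟩ => subset_intS hy hyx⟩,
      closedIn_intS hx⟩⟩
end

section
/- For each (a,b,U) ∈ F_n, the set ⟨a,b;U⟩ = {(i,j) ∈ J_n : a ≤ i ≤ b, a ≤ j ≤ b, i ∉ U, j ∈ U} is a join-irreducible element of P(n), and its unique lower cover is ⟨a,b;U⟩ \ {(a,b)}. -/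
/-- `⟨a,b;U⟩ = J_n ∩ (([a,b] \ U) × U)`. -/
def bra (n a b : ℕ) (U : Set ℕ) : Set (ℕ × ℕ) :=
  {p | p ∈ JnS n ∧ p.1 ∈ Set.Icc a b ∧ p.2 ∈ Set.Icc a b ∧ p.1 ∉ U ∧ p.2 ∈ U}

lemma mid {n a b : ℕ} {U : Set ℕ} {i j k : ℕ}
    (hik : (i,k) ∈ bra n a b U) (hij : (i,j) ∈ JnS n) (hjk : (j,k) ∈ JnS n) :
    ((i,j) ∈ bra n a b U ∧ (i,j) ≠ (a,b)) ∨ ((j,k) ∈ bra n a b U ∧ (j,k) ≠ (a,b)) := by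
  obtain ⟨hJ, hi, hk, hiU, hkU⟩ := hik
  have hij' : i < j := hij.2.1
  have hjk' : j < k := hjk.2.1
  have hja : a ≤ j := le_trans hi.1 (le_of_lt hij')
  have hjb : j ≤ b := le_trans (le_of_lt hjk') hk.2
  by_cases hjU : j ∈ U
  · left
    refine ⟨⟨hij, hi, ⟨hja, hjb⟩, hiU, hjU⟩, ?_⟩
    intro h
    rw [Prod.mk.injEq] at h
    have hkb : k ≤ b := hk.2
    omega
  · right
    refine ⟨⟨hjk, ⟨hja, hjb⟩, hk, hjU, hkU⟩, ?_⟩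
    intro h
    rw [Prod.mk.injEq] at h
    have : a ≤ i := hi.1
    omega

lemma clopen_bra (n a b : ℕ) (U : Set ℕ) : ClopenIn n (bra n a b U) := by
  constructor
  · exact ⟨fun p hp => hp.1, fun i j k h1 h2 => absurd h1.2.2.2.2 h2.2.2.2.1⟩
  · refine ⟨fun p hp => hp.1, fun i j k h1 h2 => ?_⟩
    have hik : (i,k) ∈ JnS n := ⟨h1.1.1, lt_trans h1.1.2.1 h2.1.2.1, h2.1.2.2⟩
    refine ⟨hik, fun hmem => ?_⟩
    rcases mid hmem h1.1 h2.1 with ⟨h,_⟩|⟨h,_⟩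
    · exact h1.2 h
    · exact h2.2 h

lemma clopen_D (n a b : ℕ) (U : Set ℕ) : ClopenIn n (bra n a b U \ {(a,b)}) := by
  constructor
  · exact ⟨fun p hp => hp.1.1, fun i j k h1 h2 => absurd h1.1.2.2.2.2 h2.1.2.2.2.1⟩
  · refine ⟨fun p hp => hp.1, fun i j k h1 h2 => ?_⟩
    have hik : (i,k) ∈ JnS n := ⟨h1.1.1, lt_trans h1.1.2.1 h2.1.2.1, h2.1.2.2⟩
    refine ⟨hik, fun hmem => ?_⟩
    rcases mid hmem.1 h1.1 h2.1 with ⟨h,hne⟩|⟨h,hne⟩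
    · exact h1.2 ⟨h, hne⟩
    · exact h2.2 ⟨h, hne⟩

lemma key {n a b : ℕ} {U : Set ℕ} (hab : (a,b) ∈ JnS n)
    (haU : a ∉ U) {x : Set (ℕ×ℕ)} (hx : ClopenIn n x)
    (hxb : x ⊆ bra n a b U) (habx : (a,b) ∈ x) : bra n a b U ⊆ x := by
  rintro ⟨i,j⟩ ⟨hJ, hi, hj, hiU, hjU⟩
  obtain ⟨ha1, hab', hbn⟩ := hab
  have haj : a < j := lt_of_le_of_ne hj.1 (fun h => haU (h.symm ▸ hjU))
  have step1 : (a, j) ∈ x := by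
    rcases eq_or_lt_of_le hj.2 with hjb | hjb
    · have hjb' : j = b := hjb
      rw [hjb']
      exact habx
    · by_contra haj'
      have hjbJ : (j, b) ∈ JnS n := ⟨le_trans ha1 hj.1, hjb, hbn⟩
      have hjbx : (j, b) ∉ x := fun h => (hxb h).2.2.2.1 hjU
      have := hx.2.2 a j b ⟨⟨ha1, haj, le_trans hjb.le hbn⟩, haj'⟩ ⟨hjbJ, hjbx⟩
      exact this.2 habx
  rcases eq_or_lt_of_le hi.1 with hia | hia
  · have hia' : a = i := hia
    show (i, j) ∈ x
    rw [← hia']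
    exact step1
  · by_contra hijx
    have haiJ : (a, i) ∈ JnS n := ⟨ha1, hia, le_trans hi.2 hbn⟩
    have haix : (a, i) ∉ x := fun h => hiU (hxb h).2.2.2.2
    have := hx.2.2 a i j ⟨haiJ, haix⟩ ⟨hJ, hijx⟩
    exact this.2 step1

lemma chain_single {n a b : ℕ} {U : Set ℕ} {s : Set (ℕ×ℕ)} (hs : s ⊆ bra n a b U)
    {p q : ℕ} (h : Relation.TransGen (fun u v => (u,v) ∈ s) p q) : (p,q) ∈ s := by
  induction h with
  | single h => exact h
  | tail h1 h2 ih => exact absurd (hs ih).2.2.2.2 (hs h2).2.2.2.1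

/-- For each `(a,b,U) ∈ F_n`, the set `⟨a,b;U⟩` is a join-irreducible element of the
permutohedron `P(n)`, and its unique lower cover is `⟨a,b;U⟩ \ {(a,b)}`
(i.e. the latter is the greatest element of `P(n)` strictly below `⟨a,b;U⟩`). -/
theorem stmt4 (n a b : ℕ) (U : Set ℕ) (hab : (a, b) ∈ JnS n)
    (hU : U ⊆ Set.Icc a b) (haU : a ∉ U) (hbU : b ∈ U) :
    ClopenIn n (bra n a b U) ∧
    (bra n a b U ≠ ∅ ∧
      ∀ x y, ClopenIn n x → ClopenIn n y → bra n a b U = clS (x ∪ y) →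
        bra n a b U = x ∨ bra n a b U = y) ∧
    ClopenIn n (bra n a b U \ {(a, b)}) ∧
    bra n a b U \ {(a, b)} ⊂ bra n a b U ∧
    (∀ y, ClopenIn n y → y ⊂ bra n a b U → y ⊆ bra n a b U \ {(a, b)}) := by
  obtain ⟨ha1, hab', hbn⟩ := hab
  have hab : (a,b) ∈ JnS n := ⟨ha1, hab', hbn⟩
  have habbra : (a,b) ∈ bra n a b U :=
    ⟨hab, ⟨le_refl a, hab'.le⟩, ⟨hab'.le, le_refl b⟩, haU, hbU⟩
  refine ⟨clopen_bra n a b U, ⟨?_, ?_⟩, clopen_D n a b U, ?_, ?_⟩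
  · intro h
    exact absurd habbra (h ▸ Set.notMem_empty _)
  · intro x y hx hy heq
    have hsub : x ∪ y ⊆ bra n a b U := by
      intro p hp
      rw [heq]
      exact Relation.TransGen.single hp
    have habcl : (a,b) ∈ clS (x ∪ y) := heq ▸ habbra
    have habxy : (a,b) ∈ x ∪ y := chain_single hsub habcl
    rcases habxy with habx | haby
    · left
      exact Set.Subset.antisymm (key hab haU hx (fun p hp => hsub (Or.inl hp)) habx)
        (fun p hp => hsub (Or.inl hp))
    · right
      exact Set.Subset.antisymm (key hab haU hy (fun p hp => hsub (Or.inr hp)) haby)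
        (fun p hp => hsub (Or.inr hp))
  · refine ⟨Set.diff_subset, fun h => ?_⟩
    exact (h habbra).2 rfl
  · intro y hy hsub
    intro p hp
    refine ⟨hsub.1 hp, fun hpe => ?_⟩
    have habx : (a,b) ∈ y := by
      have : p = (a,b) := hpe
      exact this ▸ hp
    exact hsub.2 (key hab haU hy hsub.1 habx)
end

section
/- The poset A(n) of Tamari-closed subsets of J_n is isomorphic to the poset A'(n) of maps f : [n] → [n] satisfying i ≤ f(i) for all i and (i ≤ j ≤ f(i) ⟹ f(j) ≤ f(i)) for all i,j, with pointwise order. An explicit isomorphism sends x ∈ A(n) to the map i ↦ the largest j ∈ [i,n] such that {i}×]i,j] ⊆ x, with inverse sending f to {(i,j) ∈ J_n : j ≤ f(i)}. -/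
/-- The Tamari lattice `A(n)`: transitive subsets `x ⊆ J_n` such that
`i < j < k` and `(i,k) ∈ x` imply `(i,j) ∈ x`. -/
def Aset (n : ℕ) : Set (Set (ℕ × ℕ)) :=
  {x | x ⊆ JnS n ∧ TransSet x ∧ ∀ i j k : ℕ, i < j → j < k → (i, k) ∈ x → (i, j) ∈ x}

/-- `A'(n)`: maps `f : [n] → [n]` with `i ≤ f i`, and `f j ≤ f i` whenever `i ≤ j ≤ f i`,
normalized to the identity outside `[n]` and ordered pointwise. -/
def A'set (n : ℕ) : Set (ℕ → ℕ) :=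
  {f | (∀ i, 1 ≤ i → i ≤ n → i ≤ f i ∧ f i ≤ n) ∧
       (∀ i j, 1 ≤ i → i ≤ n → i ≤ j → j ≤ f i → f j ≤ f i) ∧
       (∀ i, i ∉ Set.Icc 1 n → f i = i)}

/-- The map sending `x ∈ A(n)` to `i ↦` the largest `j ∈ [i,n]` with `{i}×]i,j] ⊆ x`. -/
noncomputable def toA' (n : ℕ) (x : Set (ℕ × ℕ)) : ℕ → ℕ := fun i =>
  if 1 ≤ i ∧ i ≤ n then
    sSup {j | i ≤ j ∧ j ≤ n ∧ ∀ k, i < k → k ≤ j → (i, k) ∈ x}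
  else i

/-- The map sending `f ∈ A'(n)` to `{(i,j) ∈ J_n : j ≤ f i}`. -/
def toA (n : ℕ) (f : ℕ → ℕ) : Set (ℕ × ℕ) := {p | p ∈ JnS n ∧ p.2 ≤ f p.1}

lemma Sset_mem_self (n i : ℕ) (x : Set (ℕ × ℕ)) (hi : i ≤ n) :
    i ∈ {j | i ≤ j ∧ j ≤ n ∧ ∀ k, i < k → k ≤ j → (i, k) ∈ x} :=
  ⟨le_refl i, hi, fun k hk hk' => absurd (lt_of_lt_of_le hk hk') (lt_irrefl i)⟩

lemma Sset_bdd (n i : ℕ) (x : Set (ℕ × ℕ)) :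
    BddAbove {j | i ≤ j ∧ j ≤ n ∧ ∀ k, i < k → k ≤ j → (i, k) ∈ x} :=
  ⟨n, fun j hj => hj.2.1⟩

lemma toA'_eq (n : ℕ) (x : Set (ℕ × ℕ)) (i : ℕ) (h1 : 1 ≤ i) (h2 : i ≤ n) :
    toA' n x i = sSup {j | i ≤ j ∧ j ≤ n ∧ ∀ k, i < k → k ≤ j → (i, k) ∈ x} := by
  unfold toA'; rw [if_pos ⟨h1, h2⟩]

lemma toA'_spec (n : ℕ) (x : Set (ℕ × ℕ)) (i : ℕ) (h1 : 1 ≤ i) (h2 : i ≤ n) :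
    toA' n x i ∈ {j | i ≤ j ∧ j ≤ n ∧ ∀ k, i < k → k ≤ j → (i, k) ∈ x} := by
  rw [toA'_eq n x i h1 h2]
  exact Nat.sSup_mem ⟨i, Sset_mem_self n i x h2⟩ (Sset_bdd n i x)

lemma mem_iff_toA' (n : ℕ) {x : Set (ℕ × ℕ)} (hx : x ∈ Aset n) (i j : ℕ)
    (h1 : 1 ≤ i) (h2 : i ≤ n) :
    (i, j) ∈ x ↔ i < j ∧ j ≤ toA' n x i := by
  obtain ⟨hsub, htrans, hcl⟩ := hx
  constructor
  · intro hij
    have hJ := hsub hij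
    refine ⟨hJ.2.1, ?_⟩
    rw [toA'_eq n x i h1 h2]
    apply le_csSup (Sset_bdd n i x)
    refine ⟨le_of_lt hJ.2.1, hJ.2.2, fun k hk hk' => ?_⟩
    rcases eq_or_lt_of_le hk' with h | h
    · exact h ▸ hij
    · exact hcl i k j hk h hij
  · rintro ⟨hij, hle⟩
    exact (toA'_spec n x i h1 h2).2.2 j hij hle

/-- The posets `A(n)` (ordered by inclusion) and `A'(n)` (ordered pointwise) are
isomorphic, via the explicit mutually inverse order-preserving maps `toA'` and `toA`. -/
theorem stmt10 (n : ℕ) :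
    (∀ x ∈ Aset n, toA' n x ∈ A'set n) ∧
    (∀ f ∈ A'set n, toA n f ∈ Aset n) ∧
    (∀ x ∈ Aset n, toA n (toA' n x) = x) ∧
    (∀ f ∈ A'set n, toA' n (toA n f) = f) ∧
    (∀ x ∈ Aset n, ∀ y ∈ Aset n, x ⊆ y ↔ toA' n x ≤ toA' n y) := by
  have hid : ∀ (x : Set (ℕ × ℕ)) (i : ℕ), ¬(1 ≤ i ∧ i ≤ n) → toA' n x i = i := by
    intro x i h; unfold toA'; rw [if_neg h]
  refine ⟨?_, ?_, ?_, ?_, ?_⟩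
  · -- toA' maps Aset to A'set
    intro x hx
    refine ⟨fun i h1 h2 => ⟨(toA'_spec n x i h1 h2).1, (toA'_spec n x i h1 h2).2.1⟩,
      ?_, fun i hi => hid x i (by simpa [Set.mem_Icc] using hi)⟩
    intro i j h1 h2 hij hjle
    rcases eq_or_lt_of_le hij with rfl | hlt
    · exact le_refl _
    · have hspec := toA'_spec n x i h1 h2
      have h1j : 1 ≤ j := le_trans h1 hij
      have h2j : j ≤ n := le_trans hjle hspec.2.1
      have hspecj := toA'_spec n x j h1j h2j
      rcases eq_or_lt_of_le hspecj.1 with heq | hltj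
      · exact heq ▸ hjle
      · -- (j, f j) ∈ x and (i, j) ∈ x, transitivity
        have hjf : (j, toA' n x j) ∈ x := hspecj.2.2 _ hltj (le_refl _)
        have hijx : (i, j) ∈ x := (mem_iff_toA' n hx i j h1 h2).mpr ⟨hlt, hjle⟩
        have := hx.2.1 i j (toA' n x j) hijx hjf
        exact ((mem_iff_toA' n hx i _ h1 h2).mp this).2
  · -- toA maps A'set to Aset
    intro f hf
    obtain ⟨hb, hmono, _⟩ := hf
    refine ⟨fun p hp => hp.1, ?_, ?_⟩
    · rintro i j k ⟨⟨hi1, hij, hjn⟩, hjf⟩ ⟨⟨hj1, hjk, hkn⟩, hkf⟩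
      exact ⟨⟨hi1, lt_trans hij hjk, hkn⟩,
        le_trans hkf (hmono i j hi1 (le_trans (le_of_lt hij) hjn) (le_of_lt hij) hjf)⟩
    · rintro i j k hij hjk ⟨⟨hi1, _, hkn⟩, hkf⟩
      exact ⟨⟨hi1, hij, le_trans (le_of_lt hjk) hkn⟩, le_trans (le_of_lt hjk) hkf⟩
  · -- toA ∘ toA' = id on Aset
    intro x hx
    ext ⟨i, j⟩
    constructor
    · rintro ⟨⟨hi1, hij, hjn⟩, hjf⟩
      have hi2 : i ≤ n := le_trans (le_of_lt hij) hjn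
      exact (mem_iff_toA' n hx i j hi1 hi2).mpr ⟨hij, hjf⟩
    · intro hij
      have hJ := hx.1 hij
      have hi2 : i ≤ n := le_trans (le_of_lt hJ.2.1) hJ.2.2
      exact ⟨hJ, ((mem_iff_toA' n hx i j hJ.1 hi2).mp hij).2⟩
  · -- toA' ∘ toA = id on A'set
    intro f hf
    obtain ⟨hb, hmono, hnorm⟩ := hf
    funext i
    by_cases h : 1 ≤ i ∧ i ≤ n
    · obtain ⟨h1, h2⟩ := h
      rw [toA'_eq n (toA n f) i h1 h2]
      apply le_antisymm
      · apply csSup_le ⟨i, Sset_mem_self n i _ h2⟩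
        intro j hj
        rcases le_or_gt j i with hle | hlt
        · exact le_trans hle (hb i h1 h2).1
        · exact (hj.2.2 j hlt (le_refl j)).2
      · apply le_csSup (Sset_bdd n i _)
        refine ⟨(hb i h1 h2).1, (hb i h1 h2).2, fun k hk hk' => ?_⟩
        exact ⟨⟨h1, hk, le_trans hk' (hb i h1 h2).2⟩, hk'⟩
    · rw [hid _ i h, hnorm i (by simpa [Set.mem_Icc] using h)]
  · -- order iso
    intro x hx y hy
    constructor
    · intro hxy i
      by_cases h : 1 ≤ i ∧ i ≤ n
      · obtain ⟨h1, h2⟩ := h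
        have hspec := toA'_spec n x i h1 h2
        rw [toA'_eq n y i h1 h2]
        apply le_csSup (Sset_bdd n i y)
        exact ⟨hspec.1, hspec.2.1, fun k hk hk' => hxy (hspec.2.2 k hk hk')⟩
      · rw [hid x i h, hid y i h]
    · intro hle
      rintro ⟨i, j⟩ hij
      have hJ := hx.1 hij
      have hi2 : i ≤ n := le_trans (le_of_lt hJ.2.1) hJ.2.2
      exact (mem_iff_toA' n hy i j hJ.1 hi2).mpr
        ⟨hJ.2.1, le_trans ((mem_iff_toA' n hx i j hJ.1 hi2).mp hij).2 (hle i)⟩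
end

section
/- For every f ∈ A'(n), the map f̃ defined by f̃(i) = the least j ∈ [i,n] such that n−i < f(n−j) (for i ∈ [n], with the convention f(0)=n) again belongs to A'(n); moreover the assignment f ↦ f̃ is an involutive dual automorphism of the poset A'(n). -/
/-- The extension of `f` to `0` by `f 0 = n`. -/
def ext0 (n : ℕ) (f : ℕ → ℕ) : ℕ → ℕ := fun k => if k = 0 then n else f k

/-- `f̃ i = ` the least `j ∈ [i,n]` such that `n - i < f (n - j)`
(with the convention `f 0 = n`), for `i ∈ [n]`. -/
noncomputable def tildeF (n : ℕ) (f : ℕ → ℕ) : ℕ → ℕ := fun i =>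
  if 1 ≤ i ∧ i ≤ n then
    sInf {j | i ≤ j ∧ j ≤ n ∧ n - i < ext0 n f (n - j)}
  else i

lemma tilde_S_nonempty (n : ℕ) (f : ℕ → ℕ) {i : ℕ} (h1 : 1 ≤ i) (h2 : i ≤ n) :
    Set.Nonempty {j | i ≤ j ∧ j ≤ n ∧ n - i < ext0 n f (n - j)} := by
  refine ⟨n, h2, le_refl n, ?_⟩
  have : ext0 n f (n - n) = n := by simp [ext0]
  omega

lemma tilde_eq (n : ℕ) (f : ℕ → ℕ) {i : ℕ} (h1 : 1 ≤ i) (h2 : i ≤ n) :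
    tildeF n f i = sInf {j | i ≤ j ∧ j ≤ n ∧ n - i < ext0 n f (n - j)} := by
  simp only [tildeF, if_pos (And.intro h1 h2)]

lemma tilde_self_mem (n : ℕ) (f : ℕ → ℕ) {i : ℕ} (h1 : 1 ≤ i) (h2 : i ≤ n) :
    i ≤ tildeF n f i ∧ tildeF n f i ≤ n ∧ n - i < ext0 n f (n - tildeF n f i) := by
  rw [tilde_eq n f h1 h2]
  exact Nat.sInf_mem (tilde_S_nonempty n f h1 h2)

/-- Key characterization: `j ≤ f̃ i` iff `f k ≤ n - i` for all `k ∈ (n-j, n-i]`. -/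
lemma key_s11 (n : ℕ) (f : ℕ → ℕ) {i j : ℕ} (hi1 : 1 ≤ i) (hin : i ≤ n) (hjn : j ≤ n) :
    j ≤ tildeF n f i ↔ ∀ k, n - j < k → k ≤ n - i → f k ≤ n - i := by
  rw [tilde_eq n f hi1 hin]
  constructor
  · intro h k hk1 hk2
    have hk0 : 1 ≤ k := by omega
    have hkn : k ≤ n := by omega
    -- j' = n - k is < j, hence not in S
    have hj' : n - k < j := by omega
    have hnot : (n - k) ∉ {j | i ≤ j ∧ j ≤ n ∧ n - i < ext0 n f (n - j)} :=
      Nat.notMem_of_lt_sInf (lt_of_lt_of_le hj' h)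
    simp only [Set.mem_setOf_eq, not_and, not_lt] at hnot
    have h1 : i ≤ n - k := by omega
    have h2 : n - k ≤ n := by omega
    have := hnot h1 h2
    rw [show n - (n - k) = k by omega] at this
    rwa [show ext0 n f k = f k from by unfold ext0; rw [if_neg (by omega : ¬ k = 0)]] at this
  · intro h
    by_contra hc
    push_neg at hc
    have hmem := Nat.sInf_mem (tilde_S_nonempty n f hi1 hin)
    set j' := sInf {j | i ≤ j ∧ j ≤ n ∧ n - i < ext0 n f (n - j)} with hj'
    obtain ⟨ha, hb, hcc⟩ := hmem
    have hj'lt : j' < j := hc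
    have hk1 : n - j < n - j' := by omega
    have hk2 : n - j' ≤ n - i := by omega
    have := h (n - j') hk1 hk2
    have hne : n - j' ≠ 0 := by omega
    rw [show ext0 n f (n - j') = f (n - j') from by simp [ext0, hne]] at hcc
    omega

lemma tilde_mem (n : ℕ) (f : ℕ → ℕ) : tildeF n f ∈ A'set n := by
  refine ⟨?_, ?_, ?_⟩
  · intro i h1 h2
    have := tilde_self_mem n f h1 h2
    exact ⟨this.1, this.2.1⟩
  · intro i j h1 h2 hij hjfi
    obtain ⟨ha, hb, hc⟩ := tilde_self_mem n f h1 h2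
    have hj1 : 1 ≤ j := le_trans h1 hij
    have hjn : j ≤ n := le_trans hjfi hb
    rw [tilde_eq n f hj1 hjn]
    refine Nat.sInf_le ⟨hjfi, hb, ?_⟩
    have : n - j ≤ n - i := by omega
    omega
  · intro i hi
    simp only [Set.mem_Icc, not_and, not_le] at hi
    simp only [tildeF]
    rw [if_neg]
    intro ⟨h1, h2⟩
    exact absurd (hi h1) (by omega)

/-- `g k ≤ n - a` iff there is `m ∈ [a, n-k]` with `f m > n - k`, where `g = f̃`. -/
lemma tilde_le_iff (n : ℕ) (f : ℕ → ℕ) {a k : ℕ} (ha1 : 1 ≤ a) (han : a ≤ n)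
    (hk1 : 1 ≤ k) (hkn : k ≤ n) :
    tildeF n f k ≤ n - a ↔ ∃ m, a ≤ m ∧ m ≤ n - k ∧ n - k < f m := by
  have hj : n - a + 1 ≤ n := by omega
  have hiff := key_s11 n f hk1 hkn hj (j := n - a + 1)
  rw [show (tildeF n f k ≤ n - a) ↔ ¬ (n - a + 1 ≤ tildeF n f k) by omega, hiff]
  push_neg
  constructor
  · rintro ⟨m, hm1, hm2, hm3⟩
    exact ⟨m, by omega, hm2, hm3⟩
  · rintro ⟨m, hm1, hm2, hm3⟩
    exact ⟨m, by omega, hm2, hm3⟩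

lemma tilde_involutive (n : ℕ) {f : ℕ → ℕ} (hf : f ∈ A'set n) :
    tildeF n (tildeF n f) = f := by
  obtain ⟨hb, hint, hout⟩ := hf
  funext a
  by_cases ha : 1 ≤ a ∧ a ≤ n
  · obtain ⟨ha1, han⟩ := ha
    obtain ⟨hfa1, hfa2⟩ := hb a ha1 han
    set g := tildeF n f with hg
    obtain ⟨hga, hgn, _⟩ := tilde_self_mem n g ha1 han
    refine le_antisymm ?_ ?_
    · -- tildeF n g a ≤ f a
      by_contra hc
      push_neg at hc
      -- from key (forward, j = tildeF n g a): ∀ k ∈ (n - B, n-a], g k ≤ n - a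
      have hkeyg := (key_s11 n g ha1 han hgn).mp (le_refl _)
      have hk1 : n - tildeF n g a < n - f a := by omega
      have hk2 : n - f a ≤ n - a := by omega
      have hgle := hkeyg (n - f a) hk1 hk2
      have hfk1 : 1 ≤ n - f a := by omega
      have hfkn : n - f a ≤ n := by omega
      rw [tilde_le_iff n f ha1 han hfk1 hfkn] at hgle
      obtain ⟨m, hm1, hm2, hm3⟩ := hgle
      rw [show n - (n - f a) = f a by omega] at hm2 hm3
      exact absurd (hint a m ha1 han hm1 hm2) (by omega)
    · -- f a ≤ tildeF n g a
      rw [key_s11 n g ha1 han hfa2]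
      intro k hk1 hk2
      have hkk1 : 1 ≤ k := by omega
      have hkkn : k ≤ n := by omega
      rw [tilde_le_iff n f ha1 han hkk1 hkkn]
      exact ⟨a, le_refl a, by omega, by omega⟩
  · have h1 : a ∉ Set.Icc 1 n := by simp only [Set.mem_Icc]; tauto
    have := (tilde_mem n (tildeF n f)).2.2 a h1
    rw [this, hout a h1]

lemma tilde_antitone (n : ℕ) {f g : ℕ → ℕ} (hfg : f ≤ g) :
    tildeF n g ≤ tildeF n f := by
  intro i
  by_cases hi : 1 ≤ i ∧ i ≤ n
  · obtain ⟨h1, h2⟩ := hi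
    rw [tilde_eq n f h1 h2, tilde_eq n g h1 h2]
    refine Nat.sInf_le ?_
    obtain ⟨ha, hb, hc⟩ := Nat.sInf_mem (tilde_S_nonempty n f h1 h2)
    have hmono : ∀ m, ext0 n f m ≤ ext0 n g m := by
      intro m
      unfold ext0
      split
      · exact le_refl n
      · exact hfg m
    exact ⟨ha, hb, lt_of_lt_of_le hc (hmono _)⟩
  · simp only [tildeF, if_neg hi]
    exact le_refl i

/-- For every `f ∈ A'(n)` the map `f̃` again belongs to `A'(n)`, and `f ↦ f̃` is an
involutive dual automorphism of the poset `A'(n)`. -/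
theorem stmt11 (n : ℕ) :
    (∀ f ∈ A'set n, tildeF n f ∈ A'set n) ∧
    (∀ f ∈ A'set n, tildeF n (tildeF n f) = f) ∧
    (∀ f ∈ A'set n, ∀ g ∈ A'set n, f ≤ g ↔ tildeF n g ≤ tildeF n f) := by
  refine ⟨fun f _ => tilde_mem n f, fun f hf => tilde_involutive n hf, ?_⟩
  intro f hf g hg
  constructor
  · exact tilde_antitone n
  · intro h
    have := tilde_antitone n h
    rwa [tilde_involutive n hf, tilde_involutive n hg] at this
end

section
/- Every Tamari lattice A(n) satisfies the identity (Veg₁): (a₁ ∨ b₁) ∧ (a₂ ∨ b₂) ≤ ((a₁ ∨ b₁) ∧ (a₁ ∨ b̃₂)) ∨ ((a₂ ∨ b̃₁) ∧ (a₂ ∨ b₂)), where b̃ᵢ = (b₁ ∨ b₂) ∧ (aᵢ ∨ bᵢ). -/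
section Aux

variable {n : ℕ}

lemma edge_lt {e : Set (ℕ × ℕ)} (he : e ⊆ JnS n) {u w : ℕ} (h : (u, w) ∈ e) : u < w :=
  (he h).2.1

lemma mem_clS_single {e : Set (ℕ × ℕ)} {u w : ℕ} (h : (u, w) ∈ e) : (u, w) ∈ clS e :=
  Relation.TransGen.single h

lemma mem_clS_tail {e : Set (ℕ × ℕ)} {u w k : ℕ} (h : (u, w) ∈ clS e) (h2 : (w, k) ∈ e) :
    (u, k) ∈ clS e :=
  Relation.TransGen.tail h h2

lemma mem_clS_trans {e : Set (ℕ × ℕ)} {u w k : ℕ} (h : (u, w) ∈ clS e) (h2 : (w, k) ∈ clS e) :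
    (u, k) ∈ clS e :=
  Relation.TransGen.trans h h2

lemma clS_lt {e : Set (ℕ × ℕ)} (he : e ⊆ JnS n) {u w : ℕ} (h : (u, w) ∈ clS e) : u < w := by
  have h' : Relation.TransGen (fun a b => (a, b) ∈ e) u w := h
  clear h
  induction h' with
  | single h => exact edge_lt he h
  | tail h1 h2 ih => exact ih.trans (edge_lt he h2)

lemma straddle {x y : Set (ℕ × ℕ)} (hxy : x ∪ y ⊆ JnS n) {i m : ℕ}
    (h : (i, m) ∈ clS (x ∪ y)) :
    ∀ q, i ≤ q → q < m → ∃ u w, i ≤ u ∧ u ≤ q ∧ q < w ∧ w ≤ m ∧ (u, w) ∈ x ∪ y ∧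
      (u = i ∨ (i, u) ∈ clS (x ∪ y)) ∧ (u, m) ∈ clS (x ∪ y) := by
  have h' : Relation.TransGen (fun a b => (a, b) ∈ x ∪ y) i m := h
  clear h
  induction h' with
  | single h =>
    intro q hq1 hq2
    exact ⟨i, _, le_refl i, hq1, hq2, le_refl _, h, Or.inl rfl, mem_clS_single h⟩
  | tail h1 h2 ih =>
    intro q hq1 hq2
    rename_i p c
    by_cases hpq : p ≤ q
    · exact ⟨p, c, le_of_lt (clS_lt hxy h1), hpq, hq2, le_refl _, h2, Or.inr h1,
        mem_clS_single h2⟩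
    · obtain ⟨u, w, hiu, huq, hqw, hwp, hedge, hui, hup⟩ := ih q hq1 (lt_of_not_ge hpq)
      exact ⟨u, w, hiu, huq, hqw, le_of_lt (lt_of_le_of_lt hwp (edge_lt hxy h2)), hedge, hui,
        mem_clS_tail hup h2⟩

lemma cl_interval {x y : Set (ℕ × ℕ)} (hx : x ∈ Aset n) (hy : y ∈ Aset n) {i j k : ℕ}
    (h : (i, k) ∈ clS (x ∪ y)) (hij : i < j) (hjk : j < k) : (i, j) ∈ clS (x ∪ y) := by
  have hxy : x ∪ y ⊆ JnS n := Set.union_subset hx.1 hy.1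
  obtain ⟨u, w, hiu, huj, hjw, hwk, hedge, hui, -⟩ := straddle hxy h j (le_of_lt hij) hjk
  rcases eq_or_lt_of_le huj with hu | hu
  · rcases hui with rfl | hui
    · exact absurd hu (by omega)
    · rw [hu] at hui; exact hui
  · have hedge' : (u, j) ∈ x ∪ y := by
      rcases hedge with hx' | hy'
      · exact Or.inl (hx.2.2 u j w hu hjw hx')
      · exact Or.inr (hy.2.2 u j w hu hjw hy')
    rcases hui with rfl | hui
    · exact mem_clS_single hedge'
    · exact mem_clS_tail hui hedge'

lemma lastEdge {e : Set (ℕ × ℕ)} (he : e ⊆ JnS n) {i k : ℕ} (h : (i, k) ∈ clS e) :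
    ∃ p, i ≤ p ∧ p < k ∧ (p, k) ∈ e ∧ (p = i ∨ (i, p) ∈ clS e) := by
  have h' : Relation.TransGen (fun a b => (a, b) ∈ e) i k := h
  clear h
  induction h' with
  | single h => exact ⟨i, le_refl i, edge_lt he h, h, Or.inl rfl⟩
  | tail h1 h2 _ => exact ⟨_, le_of_lt (clS_lt he h1), edge_lt he h2, h2, Or.inr h1⟩

end Aux

section Main

variable {n : ℕ} {a1 a2 b1 b2 : Set (ℕ × ℕ)}

/-- The infinite-descent lemma: under the assumption that no suffix witness in `X ∪ Y`
exists, neither an "odd" configuration (a `b1`-edge to `m'` not in `c2`) nor an "even"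
configuration (a `b2`-edge to `m'` not in `c1`) can occur. -/
lemma descent (ha1 : a1 ∈ Aset n) (ha2 : a2 ∈ Aset n) (hb1 : b1 ∈ Aset n) (hb2 : b2 ∈ Aset n)
    {i k : ℕ}
    (h1 : (i, k) ∈ clS (a1 ∪ b1)) (h2 : (i, k) ∈ clS (a2 ∪ b2))
    (hdag : ∀ j, i ≤ j → j < k →
      ¬((j, k) ∈ clS (a1 ∪ b1) ∩ clS (a1 ∪ (clS (b1 ∪ b2) ∩ clS (a2 ∪ b2))) ∨
        (j, k) ∈ clS (a2 ∪ (clS (b1 ∪ b2) ∩ clS (a1 ∪ b1))) ∩ clS (a2 ∪ b2))) :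
    ∀ m m' : ℕ,
      (i < m → m < m' → m' ≤ k → (m, m') ∈ b1 → (m, m') ∉ clS (a2 ∪ b2) →
        (m, k) ∈ clS (a1 ∪ b1) → (m, k) ∈ clS (b1 ∪ b2) →
        (m' = k ∨ (m', k) ∈ clS (a2 ∪ b2)) → False) ∧
      (i < m → m < m' → m' ≤ k → (m, m') ∈ b2 → (m, m') ∉ clS (a1 ∪ b1) →
        (m, k) ∈ clS (a2 ∪ b2) → (m, k) ∈ clS (b1 ∪ b2) →
        (m' = k ∨ (m', k) ∈ clS (a1 ∪ b1)) → False) := by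
  intro m
  induction m using Nat.strong_induction_on with
  | _ m IH =>
  intro m'
  constructor
  · -- odd configuration: (m,m') ∈ b1 \ c2
    intro him hmm' hm'k he hnc2 hmkc1 hmkB hm'alt
    have hmk : m < k := lt_of_lt_of_le hmm' hm'k
    -- (i, m') ∈ c2
    have him'c2 : (i, m') ∈ clS (a2 ∪ b2) := by
      rcases eq_or_lt_of_le hm'k with rfl | hlt
      · exact h2
      · exact cl_interval ha2 hb2 h2 (lt_trans him hmm') hlt
    obtain ⟨u, w, hiu, hum, hmw, hwm', hedge, hui, hum'⟩ :=
      straddle (Set.union_subset ha2.1 hb2.1) him'c2 m (le_of_lt him) hmm'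
    -- u ≠ m
    have hune : u ≠ m := by rintro rfl; exact hnc2 hum'
    have hultm : u < m := lt_of_le_of_ne hum hune
    have hukc2 : (u, k) ∈ clS (a2 ∪ b2) := by
      rcases hm'alt with rfl | hm'c2
      · exact hum'
      · exact mem_clS_trans hum' hm'c2
    have hulk : u < k := lt_trans hultm hmk
    rcases hedge with ha | hb
    · -- (u,w) ∈ a2 : produce a Y witness at u
      have hum_a2 : (u, m) ∈ a2 := ha2.2.2 u m w hultm hmw ha
      have hU2 : (u, k) ∈ clS (a2 ∪ (clS (b1 ∪ b2) ∩ clS (a1 ∪ b1))) :=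
        mem_clS_tail (mem_clS_single (Or.inl hum_a2)) (Or.inr ⟨hmkB, hmkc1⟩)
      exact hdag u hiu hulk (Or.inr ⟨hU2, hukc2⟩)
    · have hum_b2 : (u, m) ∈ b2 := hb2.2.2 u m w hultm hmw hb
      by_cases huc1 : (u, m) ∈ clS (a1 ∪ b1)
      · -- (u,m) ∈ b̃₁ : Y witness at u
        have humB : (u, m) ∈ clS (b1 ∪ b2) := mem_clS_single (Or.inr hum_b2)
        have hU2 : (u, k) ∈ clS (a2 ∪ (clS (b1 ∪ b2) ∩ clS (a1 ∪ b1))) :=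
          mem_clS_tail (mem_clS_single (Or.inr ⟨humB, huc1⟩)) (Or.inr ⟨hmkB, hmkc1⟩)
        exact hdag u hiu hulk (Or.inr ⟨hU2, hukc2⟩)
      · -- descend to an even configuration at (u, m)
        have hiltu : i < u := by
          rcases hui with rfl | hui
          · exact absurd (cl_interval ha1 hb1 h1 him hmk) huc1
          · exact clS_lt (Set.union_subset ha2.1 hb2.1) hui
        have hukB : (u, k) ∈ clS (b1 ∪ b2) :=
          mem_clS_trans (mem_clS_single (Or.inr hum_b2)) hmkB
        exact (IH u hultm m).2 hiltu hultm (le_of_lt hmk) hum_b2 huc1 hukc2 hukB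
          (Or.inr hmkc1)
  · -- even configuration: (m,m') ∈ b2 \ c1
    intro him hmm' hm'k he hnc1 hmkc2 hmkB hm'alt
    have hmk : m < k := lt_of_lt_of_le hmm' hm'k
    have him'c1 : (i, m') ∈ clS (a1 ∪ b1) := by
      rcases eq_or_lt_of_le hm'k with rfl | hlt
      · exact h1
      · exact cl_interval ha1 hb1 h1 (lt_trans him hmm') hlt
    obtain ⟨u, w, hiu, hum, hmw, hwm', hedge, hui, hum'⟩ :=
      straddle (Set.union_subset ha1.1 hb1.1) him'c1 m (le_of_lt him) hmm'
    have hune : u ≠ m := by rintro rfl; exact hnc1 hum'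
    have hultm : u < m := lt_of_le_of_ne hum hune
    have hukc1 : (u, k) ∈ clS (a1 ∪ b1) := by
      rcases hm'alt with rfl | hm'c1
      · exact hum'
      · exact mem_clS_trans hum' hm'c1
    have hulk : u < k := lt_trans hultm hmk
    rcases hedge with ha | hb
    · -- (u,w) ∈ a1 : produce an X witness at u
      have hum_a1 : (u, m) ∈ a1 := ha1.2.2 u m w hultm hmw ha
      have hU1 : (u, k) ∈ clS (a1 ∪ (clS (b1 ∪ b2) ∩ clS (a2 ∪ b2))) :=
        mem_clS_tail (mem_clS_single (Or.inl hum_a1)) (Or.inr ⟨hmkB, hmkc2⟩)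
      exact hdag u hiu hulk (Or.inl ⟨hukc1, hU1⟩)
    · have hum_b1 : (u, m) ∈ b1 := hb1.2.2 u m w hultm hmw hb
      by_cases huc2 : (u, m) ∈ clS (a2 ∪ b2)
      · have humB : (u, m) ∈ clS (b1 ∪ b2) := mem_clS_single (Or.inl hum_b1)
        have hU1 : (u, k) ∈ clS (a1 ∪ (clS (b1 ∪ b2) ∩ clS (a2 ∪ b2))) :=
          mem_clS_tail (mem_clS_single (Or.inr ⟨humB, huc2⟩)) (Or.inr ⟨hmkB, hmkc2⟩)
        exact hdag u hiu hulk (Or.inl ⟨hukc1, hU1⟩)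
      · have hiltu : i < u := by
          rcases hui with rfl | hui
          · exact absurd (cl_interval ha2 hb2 h2 him hmk) huc2
          · exact clS_lt (Set.union_subset ha1.1 hb1.1) hui
        have hukB : (u, k) ∈ clS (b1 ∪ b2) :=
          mem_clS_trans (mem_clS_single (Or.inl hum_b1)) hmkB
        exact (IH u hultm m).1 hiltu hultm (le_of_lt hmk) hum_b1 huc2 hukc1 hukB
          (Or.inr hmkc2)

/-- The suffix lemma: every element of `c1 ∩ c2` admits a suffix witness in `X ∪ Y`. -/
lemma suf (ha1 : a1 ∈ Aset n) (ha2 : a2 ∈ Aset n) (hb1 : b1 ∈ Aset n) (hb2 : b2 ∈ Aset n)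
    {i k : ℕ}
    (h1 : (i, k) ∈ clS (a1 ∪ b1)) (h2 : (i, k) ∈ clS (a2 ∪ b2)) :
    ∃ j, i ≤ j ∧ j < k ∧
      ((j, k) ∈ clS (a1 ∪ b1) ∩ clS (a1 ∪ (clS (b1 ∪ b2) ∩ clS (a2 ∪ b2))) ∨
       (j, k) ∈ clS (a2 ∪ (clS (b1 ∪ b2) ∩ clS (a1 ∪ b1))) ∩ clS (a2 ∪ b2)) := by
  by_contra hcon
  push_neg at hcon
  have hdag : ∀ j, i ≤ j → j < k →
      ¬((j, k) ∈ clS (a1 ∪ b1) ∩ clS (a1 ∪ (clS (b1 ∪ b2) ∩ clS (a2 ∪ b2))) ∨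
        (j, k) ∈ clS (a2 ∪ (clS (b1 ∪ b2) ∩ clS (a1 ∪ b1))) ∩ clS (a2 ∪ b2)) := by
    intro j hj1 hj2 h
    exact h.elim (hcon j hj1 hj2).1 (hcon j hj1 hj2).2
  obtain ⟨p, hip, hpk, hpe, -⟩ := lastEdge (Set.union_subset ha1.1 hb1.1) h1
  rcases hpe with ha | hb
  · exact hdag p hip hpk (Or.inl ⟨mem_clS_single (Or.inl ha),
      mem_clS_single (Or.inl ha)⟩)
  · by_cases hpc2 : (p, k) ∈ clS (a2 ∪ b2)
    · exact hdag p hip hpk (Or.inr ⟨mem_clS_single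
        (Or.inr ⟨mem_clS_single (Or.inl hb), mem_clS_single (Or.inr hb)⟩),
        hpc2⟩)
    · have hiltp : i < p := by
        rcases eq_or_lt_of_le hip with rfl | h; · exact absurd h2 hpc2
        · exact h
      exact (descent ha1 ha2 hb1 hb2 h1 h2 hdag p k).1 hiltp hpk (le_refl k) hb hpc2
        (mem_clS_single (Or.inr hb)) (mem_clS_single (Or.inl hb))
        (Or.inl rfl)

lemma mainlem (ha1 : a1 ∈ Aset n) (ha2 : a2 ∈ Aset n) (hb1 : b1 ∈ Aset n) (hb2 : b2 ∈ Aset n) :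
    ∀ k i : ℕ, (i, k) ∈ clS (a1 ∪ b1) → (i, k) ∈ clS (a2 ∪ b2) →
      (i, k) ∈ clS ((clS (a1 ∪ b1) ∩ clS (a1 ∪ (clS (b1 ∪ b2) ∩ clS (a2 ∪ b2)))) ∪
           (clS (a2 ∪ (clS (b1 ∪ b2) ∩ clS (a1 ∪ b1))) ∩ clS (a2 ∪ b2))) := by
  intro k
  induction k using Nat.strong_induction_on with
  | _ k IH =>
  intro i h1 h2
  obtain ⟨j, hij, hjk, hXY⟩ := suf ha1 ha2 hb1 hb2 h1 h2
  rcases eq_or_lt_of_le hij with rfl | hij'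
  · exact mem_clS_single (by exact hXY)
  · have hj1 : (i, j) ∈ clS (a1 ∪ b1) := cl_interval ha1 hb1 h1 hij' hjk
    have hj2 : (i, j) ∈ clS (a2 ∪ b2) := cl_interval ha2 hb2 h2 hij' hjk
    exact mem_clS_tail (IH j hjk i hj1 hj2) (by exact hXY)

end Main

/-- Every Tamari lattice `A(n)` satisfies the identity (Veg₁):
`(a₁ ∨ b₁) ∧ (a₂ ∨ b₂) ≤ ((a₁ ∨ b₁) ∧ (a₁ ∨ b̃₂)) ∨ ((a₂ ∨ b̃₁) ∧ (a₂ ∨ b₂))`,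
where `b̃ᵢ = (b₁ ∨ b₂) ∧ (aᵢ ∨ bᵢ)`. -/
theorem stmt16 (n : ℕ) (a1 a2 b1 b2 : Set (ℕ × ℕ))
    (ha1 : a1 ∈ Aset n) (ha2 : a2 ∈ Aset n) (hb1 : b1 ∈ Aset n) (hb2 : b2 ∈ Aset n) :
    clS (a1 ∪ b1) ∩ clS (a2 ∪ b2) ⊆
      clS ((clS (a1 ∪ b1) ∩ clS (a1 ∪ (clS (b1 ∪ b2) ∩ clS (a2 ∪ b2)))) ∪
           (clS (a2 ∪ (clS (b1 ∪ b2) ∩ clS (a1 ∪ b1))) ∩ clS (a2 ∪ b2))) := by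
  rintro ⟨i, k⟩ ⟨hp1, hp2⟩
  exact mainlem ha1 ha2 hb1 hb2 k i hp1 hp2
end

section
/- For all natural numbers m and n, the lattices B(m,n) and B(n,m) are dually isomorphic. -/
/-!
Complementing a set of atoms and then exchanging the roles of the `a`- and `b`-atoms is an
order-reversing bijection from the subsets of `Fin m ⊕ Fin n` to those of `Fin n ⊕ Fin m`, and it
sends the doubled element `a₁ ∨ ⋯ ∨ a_m` (all left atoms) to the doubled element of `B(n,m)`.
Extending it to the doubled element by exchanging its two copies gives the dual isomorphism.
-/

/-- The carrier of the lattice `B(m,n)`, obtained from the Boolean lattice of all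
subsets of the `m + n` atoms `a₁,…,a_m,b₁,…,b_n` (modelled as `Fin m ⊕ Fin n`)
by doubling the element `A = a₁ ∨ ⋯ ∨ a_m` (the set of left atoms): the doubled
element `A` is replaced by the two copies `(A, false) < (A, true)`. -/
def Bcar (m n : ℕ) : Type :=
  {p : Set (Fin m ⊕ Fin n) × Bool // p.2 = true → p.1 = Set.range Sum.inl}

/-- The order of `B(m,n)`: `(s, b) ≤ (t, c)` iff `s ⊆ t`, and `b ≤ c` when `s = t`.
This is the interval-doubling order: a new element `p = (A, true)` is added with
`aᵢ ≤ (A, false) < p` for every `i ≤ m` and `p < A ∪ {b_j}` for every `j ≤ n`. -/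
def Ble {m n : ℕ} (x y : Bcar m n) : Prop :=
  x.1.1 ⊆ y.1.1 ∧ (x.1.1 = y.1.1 → (x.1.2 = true → y.1.2 = true))

open Set

section DualSet

variable {α β : Type*}

def dualSet (s : Set (α ⊕ β)) : Set (β ⊕ α) := Sum.swap ⁻¹' sᶜ

@[simp]
lemma dualSet_dualSet (s : Set (α ⊕ β)) : dualSet (dualSet s) = s := by
  simp only [dualSet, ← preimage_compl, compl_compl, ← preimage_comp, Sum.swap_swap_eq,
    preimage_id]

lemma dualSet_injective : Function.Injective (dualSet : Set (α ⊕ β) → Set (β ⊕ α)) :=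
  Function.LeftInverse.injective dualSet_dualSet

lemma dualSet_antitone : Antitone (dualSet : Set (α ⊕ β) → Set (β ⊕ α)) :=
  fun _ _ hst => preimage_mono (compl_subset_compl.2 hst)

lemma dualSet_subset_dualSet_iff {s t : Set (α ⊕ β)} : dualSet s ⊆ dualSet t ↔ t ⊆ s :=
  ⟨fun h => by simpa using dualSet_antitone h, fun h => dualSet_antitone h⟩

@[simp]
lemma dualSet_range_inl : dualSet (range (Sum.inl : α → α ⊕ β)) = range Sum.inl := by
  ext z; cases z <;> simp [dualSet]

lemma dualSet_eq_range_inl_iff {s : Set (α ⊕ β)} :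
    dualSet s = range Sum.inl ↔ s = range Sum.inl := by
  rw [← dualSet_range_inl, dualSet_injective.eq_iff]

end DualSet

namespace Bcar

variable {m n : ℕ}

lemma snd_eq_false_of_ne {x : Bcar m n} (h : x.1.1 ≠ range Sum.inl) : x.1.2 = false :=
  Bool.not_eq_true _ ▸ mt x.2 h

open Classical in
noncomputable def dual (x : Bcar m n) : Bcar n m :=
  ⟨(dualSet x.1.1, decide (x.1.1 = range Sum.inl) && !x.1.2), fun h => by
    simp only [Bool.and_eq_true, decide_eq_true_eq] at h
    rw [h.1, dualSet_range_inl]⟩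

lemma dual_dual (x : Bcar m n) : x.dual.dual = x := by
  refine Subtype.ext (Prod.ext (dualSet_dualSet _) ?_)
  simp only [dual, dualSet_eq_range_inl_iff]
  by_cases hx : x.1.1 = range Sum.inl
  · simp [hx]
  · simp [hx, snd_eq_false_of_ne hx]

lemma ble_iff_ble_dual (x y : Bcar m n) : Ble x y ↔ Ble y.dual x.dual := by
  obtain ⟨⟨s, b⟩, hb⟩ := x
  obtain ⟨⟨t, c⟩, hc⟩ := y
  simp only [Ble, dual, dualSet_subset_dualSet_iff, dualSet_injective.eq_iff, eq_comm (a := t)]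
  refine and_congr_right fun _ => imp_congr_right fun (hst : s = t) => ?_
  subst hst
  dsimp only at hb
  cases b <;> cases c <;> simp_all

end Bcar

/-- For all natural numbers `m` and `n`, the lattices `B(m,n)` and `B(n,m)` are
dually isomorphic: there is a bijection reversing the order in both directions. -/
theorem stmt18 (m n : ℕ) :
    ∃ e : Bcar m n ≃ Bcar n m, ∀ x y : Bcar m n, Ble x y ↔ Ble (e y) (e x) :=
  ⟨⟨Bcar.dual, Bcar.dual, Bcar.dual_dual, Bcar.dual_dual⟩, Bcar.ble_iff_ble_dual⟩
end
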